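/- arXiv:2603.23053 — 6 statements merged into one kernel-verified Lean document; each statement's English description precedes it below -/
import Mathlib

section
/- (Spectral form of the forward implication of Theorem 2.1: superconcentration implies chaos.) Let w : ℕ → ℝ satisfy w n ≥ 0 for all n and W := ∑_{n=0}^∞ n · n! · w n < ∞. Let ε > 0 and δ > 0. If ∑_{n=1}^∞ n! · w n ≤ ε · W, then for every t ≥ δ one has ∑_{n=0}^∞ n · n! · w n · e^{−(n−1) t} ≤ (ε e^{δ} / δ) · W. -/
open scoped BigOperators

/-- spectral form of the forward implication of Theorem 2.1:
superconcentration implies chaos: if `∑_{n≥1} n!·w n ≤ ε·W` where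
`W = ∑ n·n!·w n < ∞`, then for every `t ≥ δ`,
`∑ n·n!·w n·e^{-(n-1) t} ≤ (ε e^δ / δ)·W`. -/
theorem stmt_2 (w : ℕ → ℝ) (hw : ∀ n, 0 ≤ w n)
    (hW : Summable fun n : ℕ => (n : ℝ) * (Nat.factorial n : ℝ) * w n)
    (ε δ : ℝ) (hε : 0 < ε) (hδ : 0 < δ)
    (hsc : (∑' n : ℕ, (Nat.factorial (n + 1) : ℝ) * w (n + 1)) ≤
      ε * ∑' n : ℕ, (n : ℝ) * (Nat.factorial n : ℝ) * w n) :
    ∀ t : ℝ, δ ≤ t →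
      (∑' n : ℕ, (n : ℝ) * (Nat.factorial n : ℝ) * w n * Real.exp (-((n : ℝ) - 1) * t)) ≤
        (ε * Real.exp δ / δ) * ∑' n : ℕ, (n : ℝ) * (Nat.factorial n : ℝ) * w n := by
  intro t ht
  have ht0 : 0 < t := hδ.trans_le ht
  set f : ℕ → ℝ := fun n => (n : ℝ) * (Nat.factorial n : ℝ) * w n * Real.exp (-((n : ℝ) - 1) * t) with hf
  set b : ℕ → ℝ := fun n => (Real.exp δ / δ) * ((Nat.factorial (n + 1) : ℝ) * w (n + 1)) with hb
  -- key pointwise bound: (n+1) * exp(-n t) ≤ exp δ / δ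
  have key : ∀ n : ℕ, ((n : ℝ) + 1) * Real.exp (-(n : ℝ) * t) ≤ Real.exp δ / δ := by
    intro n
    have hn : (0:ℝ) ≤ (n : ℝ) := n.cast_nonneg
    have h1 : Real.exp (-(n : ℝ) * t) ≤ Real.exp (-(n : ℝ) * δ) := by
      apply Real.exp_le_exp.2
      nlinarith
    have h2 : ((n : ℝ) + 1) * δ ≤ Real.exp (((n : ℝ) + 1) * δ) := by
      nlinarith [Real.add_one_le_exp (((n : ℝ) + 1) * δ)]
    have h3 : Real.exp (((n : ℝ) + 1) * δ) * Real.exp (-(n:ℝ) * δ) = Real.exp δ := by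
      rw [← Real.exp_add]; ring_nf
    have h4 : (0:ℝ) < Real.exp (-(n:ℝ) * δ) := Real.exp_pos _
    have h5 : ((n : ℝ) + 1) * Real.exp (-(n : ℝ) * δ) * δ ≤ Real.exp δ := by
      nlinarith
    calc ((n : ℝ) + 1) * Real.exp (-(n : ℝ) * t)
        ≤ ((n : ℝ) + 1) * Real.exp (-(n : ℝ) * δ) :=
          mul_le_mul_of_nonneg_left h1 (by positivity)
      _ ≤ Real.exp δ / δ := by
          rw [le_div_iff₀ hδ]; linarith
  -- pointwise: f (n+1) ≤ b n
  have hfb : ∀ n : ℕ, f (n + 1) ≤ b n := by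
    intro n
    have hfac : (0:ℝ) ≤ (Nat.factorial (n+1) : ℝ) * w (n+1) :=
      mul_nonneg (by positivity) (hw _)
    have : f (n + 1) = (((n:ℝ) + 1) * Real.exp (-(n:ℝ) * t)) * ((Nat.factorial (n+1) : ℝ) * w (n+1)) := by
      simp only [hf]
      push_cast
      ring_nf
    rw [this, hb]
    exact mul_le_mul_of_nonneg_right (key n) hfac
  have hfnonneg : ∀ n : ℕ, 0 ≤ f n := by
    intro n
    apply mul_nonneg (mul_nonneg (mul_nonneg n.cast_nonneg (by positivity)) (hw n)) (Real.exp_pos _).le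
  -- summability of b
  have hWs : Summable fun n : ℕ => (((n:ℕ)+1 : ℕ) : ℝ) * (Nat.factorial (n+1) : ℝ) * w (n+1) := by
    exact_mod_cast (summable_nat_add_iff 1).2 hW
  have hb2 : Summable fun n : ℕ => (Nat.factorial (n+1) : ℝ) * w (n+1) := by
    apply Summable.of_nonneg_of_le
      (fun n => mul_nonneg (by positivity) (hw _))
      (fun n => ?_) hWs
    have hfac : (0:ℝ) ≤ (Nat.factorial (n+1) : ℝ) * w (n+1) :=
      mul_nonneg (by positivity) (hw _)
    push_cast
    nlinarith [n.cast_nonneg (α := ℝ)]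
  have hbs : Summable b := hb2.mul_left _
  -- summability of shifted f, hence f
  have hfs1 : Summable fun n : ℕ => f (n + 1) :=
    Summable.of_nonneg_of_le (fun n => hfnonneg _) hfb hbs
  have hfs : Summable f := (summable_nat_add_iff 1).1 hfs1
  have hf0 : f 0 = 0 := by simp [hf]
  have hsum : (∑' n, f n) = ∑' n, f (n + 1) := by
    rw [Summable.tsum_eq_zero_add hfs, hf0, zero_add]
  have h6 : (∑' n, f (n + 1)) ≤ ∑' n, b n := Summable.tsum_le_tsum hfb hfs1 hbs
  have h7 : (∑' n, b n) = (Real.exp δ / δ) * ∑' n, (Nat.factorial (n+1) : ℝ) * w (n+1) := by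
    rw [hb, tsum_mul_left]
  have hWpos : 0 ≤ ∑' n : ℕ, (n : ℝ) * (Nat.factorial n : ℝ) * w n :=
    tsum_nonneg fun n => mul_nonneg (mul_nonneg n.cast_nonneg (by positivity)) (hw n)
  have hed : 0 < Real.exp δ / δ := div_pos (Real.exp_pos _) hδ
  calc (∑' n, f n) = ∑' n, f (n + 1) := hsum
    _ ≤ ∑' n, b n := h6
    _ = (Real.exp δ / δ) * ∑' n, (Nat.factorial (n+1) : ℝ) * w (n+1) := h7
    _ ≤ (Real.exp δ / δ) * (ε * ∑' n : ℕ, (n : ℝ) * (Nat.factorial n : ℝ) * w n) :=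
        mul_le_mul_of_nonneg_left hsc hed.le
    _ = (ε * Real.exp δ / δ) * ∑' n : ℕ, (n : ℝ) * (Nat.factorial n : ℝ) * w n := by ring
end

section
/- (Spectral form of the converse implication of Theorem 2.1: chaos implies superconcentration.) Let w : ℕ → ℝ satisfy w n ≥ 0 for all n and W := ∑_{n=0}^∞ n · n! · w n < ∞. Let ε > 0 and δ > 0. If for every t ≥ δ one has ∑_{n=0}^∞ n · n! · w n · e^{−(n−1) t} ≤ ε · W, then ∑_{n=1}^∞ n! · w n ≤ (ε + δ) · W. -/
open scoped BigOperators

lemma key_ineq (δ : ℝ) (hδ : 0 < δ) (n : ℕ) :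
    (1 : ℝ) ≤ ((n : ℝ) + 1) * (δ + Real.exp (-(n : ℝ) * δ)) := by
  have hn : (0 : ℝ) ≤ (n : ℝ) := Nat.cast_nonneg n
  rcases le_or_gt 1 (((n : ℝ) + 1) * δ) with h | h
  · have := Real.exp_pos (-(n : ℝ) * δ)
    nlinarith
  · nlinarith [Real.add_one_le_exp (-(n : ℝ) * δ)]

/-- spectral form of the converse implication of Theorem 2.1:
chaos implies superconcentration: if for every `t ≥ δ` one has
`∑ n·n!·w n·e^{-(n-1) t} ≤ ε·W` where `W = ∑ n·n!·w n < ∞`, then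
`∑_{n≥1} n!·w n ≤ (ε + δ)·W`. -/
theorem stmt_3 (w : ℕ → ℝ) (hw : ∀ n, 0 ≤ w n)
    (hW : Summable fun n : ℕ => (n : ℝ) * (Nat.factorial n : ℝ) * w n)
    (ε δ : ℝ) (hε : 0 < ε) (hδ : 0 < δ)
    (hchaos : ∀ t : ℝ, δ ≤ t →
      (∑' n : ℕ, (n : ℝ) * (Nat.factorial n : ℝ) * w n * Real.exp (-((n : ℝ) - 1) * t)) ≤
        ε * ∑' n : ℕ, (n : ℝ) * (Nat.factorial n : ℝ) * w n) :
    (∑' n : ℕ, (Nat.factorial (n + 1) : ℝ) * w (n + 1)) ≤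
      (ε + δ) * ∑' n : ℕ, (n : ℝ) * (Nat.factorial n : ℝ) * w n := by
  set a : ℕ → ℝ := fun n => (n : ℝ) * (Nat.factorial n : ℝ) * w n with ha_def
  have ha : ∀ n, 0 ≤ a n := fun n => by
    have := hw n
    positivity
  -- summability of a n * exp(-(n-1)δ)
  have hbound : ∀ n : ℕ, a n * Real.exp (-((n : ℝ) - 1) * δ) ≤ a n * Real.exp δ := by
    intro n
    apply mul_le_mul_of_nonneg_left _ (ha n)
    apply Real.exp_le_exp.2
    have hn : (0 : ℝ) ≤ (n : ℝ) := Nat.cast_nonneg n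
    nlinarith
  have s1 : Summable (fun n : ℕ => a n * Real.exp (-((n : ℝ) - 1) * δ)) := by
    apply Summable.of_nonneg_of_le (fun n => mul_nonneg (ha n) (Real.exp_pos _).le) hbound (hW.mul_right _)
  have s2 : Summable (fun n : ℕ => a n * δ) := hW.mul_right δ
  set f : ℕ → ℝ := fun n => a n * δ + a n * Real.exp (-((n : ℝ) - 1) * δ) with hf_def
  have sf : Summable f := s2.add s1
  have hf_nonneg : ∀ n, 0 ≤ f n := fun n => by
    have := ha n; have := Real.exp_pos (-((n : ℝ) - 1) * δ); positivity
  -- termwise bound for n ≥ 1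
  have hterm : ∀ n : ℕ, (Nat.factorial (n + 1) : ℝ) * w (n + 1) ≤ f (n + 1) := by
    intro n
    have hkey := key_ineq δ hδ n
    have hcast : ((n + 1 : ℕ) : ℝ) = (n : ℝ) + 1 := by push_cast; ring
    have hcast2 : (-(((n + 1 : ℕ) : ℝ) - 1) * δ) = (-(n : ℝ) * δ) := by push_cast; ring
    have hwp : 0 ≤ (Nat.factorial (n + 1) : ℝ) * w (n + 1) := by
      have := hw (n + 1); positivity
    have hcast3 : (-((n : ℝ) + 1 - 1) * δ) = (-(n : ℝ) * δ) := by ring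
    simp only [hf_def, ha_def, hcast, hcast3]
    calc (Nat.factorial (n + 1) : ℝ) * w (n + 1)
        = ((Nat.factorial (n + 1) : ℝ) * w (n + 1)) * 1 := by ring
      _ ≤ ((Nat.factorial (n + 1) : ℝ) * w (n + 1)) *
          (((n : ℝ) + 1) * (δ + Real.exp (-(n : ℝ) * δ))) :=
          mul_le_mul_of_nonneg_left hkey hwp
      _ = ((n : ℝ) + 1) * (Nat.factorial (n + 1) : ℝ) * w (n + 1) * δ +
          ((n : ℝ) + 1) * (Nat.factorial (n + 1) : ℝ) * w (n + 1) *
            Real.exp (-(n : ℝ) * δ) := by ring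
  have sf1 : Summable (fun n : ℕ => f (n + 1)) := (summable_nat_add_iff 1).2 sf
  have sLHS : Summable (fun n : ℕ => (Nat.factorial (n + 1) : ℝ) * w (n + 1)) := by
    apply Summable.of_nonneg_of_le (fun n => by have := hw (n+1); positivity) hterm sf1
  have step1 : (∑' n : ℕ, (Nat.factorial (n + 1) : ℝ) * w (n + 1)) ≤ ∑' n, f (n + 1) :=
    Summable.tsum_le_tsum hterm sLHS sf1
  have step2 : (∑' n : ℕ, f (n + 1)) ≤ ∑' n, f n := by
    have h := Summable.sum_add_tsum_nat_add 1 sf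
    have h0 : 0 ≤ ∑ i ∈ Finset.range 1, f i := Finset.sum_nonneg (fun i _ => hf_nonneg i)
    linarith [h]
  have hWnn : 0 ≤ ∑' n, a n := tsum_nonneg ha
  have step3 : (∑' n : ℕ, f n) ≤ (ε + δ) * ∑' n, a n := by
    rw [Summable.tsum_add s2 s1]
    have e1 : (∑' n : ℕ, a n * δ) = δ * ∑' n, a n := by
      rw [tsum_mul_right]; ring
    have e2 : (∑' n : ℕ, a n * Real.exp (-((n : ℝ) - 1) * δ)) ≤ ε * ∑' n, a n :=
      hchaos δ le_rfl
    rw [e1]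
    linarith
  calc (∑' n : ℕ, (Nat.factorial (n + 1) : ℝ) * w (n + 1))
      ≤ ∑' n, f (n + 1) := step1
    _ ≤ ∑' n, f n := step2
    _ ≤ (ε + δ) * ∑' n, a n := step3
end

section
/- (Abstract form of the forward implication of Theorem 2.1, after Chatterjee.) Let E : [0, ∞) → [0, ∞) be a function such that E is nonincreasing and the map t ↦ e^{t} E(t) is nonincreasing. Let ε > 0 and δ > 0. If ∫_0^∞ E(t) dt ≤ ε · E(0), then for every t ≥ δ one has e^{t} E(t) ≤ (ε e^{δ} / δ) · E(0). -/
open scoped BigOperators ENNReal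

/-- abstract forward implication of Theorem 2.1, after Chatterjee:
if `E : [0,∞) → [0,∞)` is nonincreasing, `t ↦ e^t E t` is nonincreasing, and
`∫_0^∞ E(t) dt ≤ ε·E 0` (Lebesgue integral), then for every `t ≥ δ`,
`e^t E t ≤ (ε e^δ / δ)·E 0`. -/
theorem stmt_4 (E : ℝ → ℝ) (hE0 : ∀ t, 0 ≤ t → 0 ≤ E t)
    (hmono : AntitoneOn E (Set.Ici 0))
    (hmono' : AntitoneOn (fun t => Real.exp t * E t) (Set.Ici 0))
    (ε δ : ℝ) (hε : 0 < ε) (hδ : 0 < δ)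
    (hsc : ∫⁻ t in Set.Ioi (0 : ℝ), ENNReal.ofReal (E t) ≤ ENNReal.ofReal (ε * E 0)) :
    ∀ t : ℝ, δ ≤ t → Real.exp t * E t ≤ (ε * Real.exp δ / δ) * E 0 := by
  intro t ht
  have hδt : (0:ℝ) ≤ δ := hδ.le
  have hEδ : 0 ≤ E δ := hE0 δ hδt
  have hE00 : 0 ≤ E 0 := hE0 0 le_rfl
  -- key: δ * E δ ≤ ε * E 0
  have h1 : ENNReal.ofReal (E δ) * ENNReal.ofReal δ
      ≤ ∫⁻ s in Set.Ioc (0:ℝ) δ, ENNReal.ofReal (E s) := by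
    have hconst : ∫⁻ _ in Set.Ioc (0:ℝ) δ, ENNReal.ofReal (E δ)
        = ENNReal.ofReal (E δ) * ENNReal.ofReal δ := by
      rw [MeasureTheory.setLIntegral_const, Real.volume_Ioc, sub_zero]
    rw [← hconst]
    refine MeasureTheory.setLIntegral_mono' measurableSet_Ioc ?_
    intro s hs
    exact ENNReal.ofReal_le_ofReal (hmono hs.1.le (Set.mem_Ici.mpr hδt) hs.2)
  have h2 : (∫⁻ s in Set.Ioc (0:ℝ) δ, ENNReal.ofReal (E s))
      ≤ ∫⁻ s in Set.Ioi (0:ℝ), ENNReal.ofReal (E s) :=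
    MeasureTheory.lintegral_mono_set Set.Ioc_subset_Ioi_self
  have h3 : ENNReal.ofReal (E δ * δ) ≤ ENNReal.ofReal (ε * E 0) := by
    rw [ENNReal.ofReal_mul hEδ]
    exact (h1.trans h2).trans hsc
  have key : E δ * δ ≤ ε * E 0 :=
    (ENNReal.ofReal_le_ofReal_iff (by positivity)).mp h3
  have hEδle : E δ ≤ ε * E 0 / δ := by
    rw [le_div_iff₀ hδ]; exact key
  have hstep : Real.exp t * E t ≤ Real.exp δ * E δ :=
    hmono' (Set.mem_Ici.mpr hδt) (Set.mem_Ici.mpr (hδt.trans ht)) ht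
  calc Real.exp t * E t ≤ Real.exp δ * E δ := hstep
    _ ≤ Real.exp δ * (ε * E 0 / δ) :=
        mul_le_mul_of_nonneg_left hEδle (Real.exp_pos δ).le
    _ = (ε * Real.exp δ / δ) * E 0 := by ring
end

section
/- (Abstract form of the converse implication of Theorem 2.1, after Chatterjee.) Let E : [0, ∞) → [0, ∞) be a function such that E is nonincreasing and the map t ↦ e^{t} E(t) is nonincreasing. Let ε > 0 and δ > 0. If e^{t} E(t) ≤ ε · E(0) for every t ≥ δ, then ∫_0^∞ E(t) dt ≤ (ε + δ) · E(0). -/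
/-!
Split `(0, ∞)` at `δ`. On `(0, δ]` monotonicity gives `E t ≤ E 0`, contributing at most `δ E 0`.
Beyond `δ` the hypothesis reads `E t ≤ ε E 0 e^{-t}`, and `∫_δ^∞ e^{-t} dt = e^{-δ} ≤ 1`.
-/

open MeasureTheory Set Real

theorem lintegral_Ioi_ofReal_exp_neg (c : ℝ) :
    ∫⁻ t in Ioi c, ENNReal.ofReal (exp (-t)) = ENNReal.ofReal (exp (-c)) := by
  rw [← ofReal_integral_eq_lintegral_ofReal (integrableOn_exp_neg_Ioi c)
    (ae_of_all _ fun t => (exp_pos _).le), integral_exp_neg_Ioi]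

theorem setLIntegral_Ioc_ofReal_le_of_antitoneOn {f : ℝ → ℝ} {a : ℝ} (b : ℝ)
    (hf : AntitoneOn f (Ici a)) :
    ∫⁻ t in Ioc a b, ENNReal.ofReal (f t) ≤ ENNReal.ofReal (b - a) * ENNReal.ofReal (f a) :=
  calc ∫⁻ t in Ioc a b, ENNReal.ofReal (f t)
      ≤ ∫⁻ _ in Ioc a b, ENNReal.ofReal (f a) :=
        setLIntegral_mono' measurableSet_Ioc fun _ ht =>
          ENNReal.ofReal_le_ofReal (hf self_mem_Ici ht.1.le ht.1.le)
    _ = ENNReal.ofReal (b - a) * ENNReal.ofReal (f a) := by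
        rw [setLIntegral_const, Real.volume_Ioc, mul_comm]

theorem setLIntegral_Ioi_ofReal_le_of_exp_mul_le {f : ℝ → ℝ} {c C : ℝ}
    (hf : ∀ t, c < t → exp t * f t ≤ C) :
    ∫⁻ t in Ioi c, ENNReal.ofReal (f t) ≤ ENNReal.ofReal C * ENNReal.ofReal (exp (-c)) := by
  have h_decay : ∀ t, c < t → f t ≤ C * exp (-t) := fun t ht =>
    calc f t = exp (-t) * (exp t * f t) := by
          rw [← mul_assoc, ← exp_add, neg_add_cancel, exp_zero, one_mul]
      _ ≤ exp (-t) * C := by gcongr; exact hf t ht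
      _ = C * exp (-t) := mul_comm _ _
  calc ∫⁻ t in Ioi c, ENNReal.ofReal (f t)
      ≤ ∫⁻ t in Ioi c, ENNReal.ofReal C * ENNReal.ofReal (exp (-t)) :=
        setLIntegral_mono' measurableSet_Ioi fun t ht => by
          rw [← ENNReal.ofReal_mul' (exp_pos _).le]
          exact ENNReal.ofReal_le_ofReal (h_decay t ht)
    _ = ENNReal.ofReal C * ENNReal.ofReal (exp (-c)) := by
        rw [lintegral_const_mul _ (by fun_prop), lintegral_Ioi_ofReal_exp_neg]

theorem stmt_5_general (E : ℝ → ℝ)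
    (hmono : AntitoneOn E (Set.Ici 0))
    (ε δ : ℝ) (hε : 0 < ε) (hδ : 0 < δ)
    (hchaos : ∀ t : ℝ, δ ≤ t → Real.exp t * E t ≤ ε * E 0) :
    ∫⁻ t in Set.Ioi (0 : ℝ), ENNReal.ofReal (E t) ≤ ENNReal.ofReal ((ε + δ) * E 0) := by
  have h_head := setLIntegral_Ioc_ofReal_le_of_antitoneOn δ hmono
  have h_tail := setLIntegral_Ioi_ofReal_le_of_exp_mul_le fun t (ht : δ < t) => hchaos t ht.le
  have h_exp : ENNReal.ofReal (exp (-δ)) ≤ 1 :=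
    ENNReal.ofReal_le_one.mpr (exp_le_one_iff.mpr (neg_nonpos.mpr hδ.le))
  rw [sub_zero] at h_head
  rw [← Ioc_union_Ioi_eq_Ioi hδ.le, lintegral_union measurableSet_Ioi (Ioc_disjoint_Ioi le_rfl)]
  calc _ ≤ ENNReal.ofReal δ * ENNReal.ofReal (E 0) + ENNReal.ofReal (ε * E 0) * 1 :=
        add_le_add h_head (h_tail.trans (by gcongr))
    _ = ENNReal.ofReal ((ε + δ) * E 0) := by
        rw [mul_one, ENNReal.ofReal_mul hε.le, ← add_mul, ← ENNReal.ofReal_add hδ.le hε.le,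
          ← ENNReal.ofReal_mul (by positivity), add_comm δ]

/-- abstract converse implication of Theorem 2.1, after Chatterjee:
if `E : [0,∞) → [0,∞)` is nonincreasing, `t ↦ e^t E t` is nonincreasing, and
`e^t E t ≤ ε·E 0` for every `t ≥ δ`, then `∫_0^∞ E(t) dt ≤ (ε + δ)·E 0`
(Lebesgue integral). -/
theorem stmt_5 (E : ℝ → ℝ) (hE0 : ∀ t, 0 ≤ t → 0 ≤ E t)
    (hmono : AntitoneOn E (Set.Ici 0))
    (hmono' : AntitoneOn (fun t => Real.exp t * E t) (Set.Ici 0))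
    (ε δ : ℝ) (hε : 0 < ε) (hδ : 0 < δ)
    (hchaos : ∀ t : ℝ, δ ≤ t → Real.exp t * E t ≤ ε * E 0) :
    ∫⁻ t in Set.Ioi (0 : ℝ), ENNReal.ofReal (E t) ≤ ENNReal.ofReal ((ε + δ) * E 0) :=
  stmt_5_general E hmono ε δ hε hδ hchaos
end

section
/- (Spectral core of Theorem 2.8, the variance lower bound.) Let w : ℕ → ℝ satisfy w n ≥ 0 for all n, suppose S := ∑_{n=0}^∞ n! · w n < ∞, and suppose that the series ∑_{n=0}^∞ n · n! · w n converges with ∑_{n=0}^∞ n · n! · w n ≤ α · S for some α > 0. Then ∑_{n=0}^∞ (n! / (n+1)) · w n ≥ S / (α + 1). -/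
/-!
With `a = α + 1`, the tangent line of the convex function `x ↦ 1/x` at `x = a` gives
`1/(n+1) ≥ 2/a - (n+1)/a²`. Weighting by `n!·w n` and summing bounds the left-hand side below by
`2S/a - (∑ (n+1)·n!·w n)/a² ≥ 2S/a - aS/a² = S/a`.
-/

theorem two_div_sub_div_sq_le_inv {x : ℝ} (hx : 0 < x) (a : ℝ) : 2 / a - x / a ^ 2 ≤ x⁻¹ := by
  rcases eq_or_ne a 0 with rfl | ha
  · simpa using hx.le
  · have hdiff : x⁻¹ - (2 / a - x / a ^ 2) = x⁻¹ * (1 - x / a) ^ 2 := by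
      field_simp
      ring
    linarith [mul_nonneg (inv_nonneg.2 hx.le) (sq_nonneg (1 - x / a))]

section WeightedSeries

variable {v : ℕ → ℝ}

theorem two_div_mul_tsum_sub_le_tsum_div_succ (hv : ∀ n, 0 ≤ v n) (hs : Summable v)
    (hns : Summable fun n : ℕ => (n : ℝ) * v n) (a : ℝ) :
    2 / a * ∑' n, v n - (∑' n : ℕ, ((n : ℝ) + 1) * v n) / a ^ 2 ≤
      ∑' n : ℕ, v n / ((n : ℝ) + 1) := by
  have hsucc : Summable fun n : ℕ => ((n : ℝ) + 1) * v n := by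
    simpa only [add_mul, one_mul] using hns.add hs
  have hdiv : Summable fun n : ℕ => v n / ((n : ℝ) + 1) :=
    hs.of_nonneg_of_le (fun n => div_nonneg (hv n) (by positivity))
      (fun n => div_le_self (hv n) (by simp))
  calc 2 / a * ∑' n, v n - (∑' n : ℕ, ((n : ℝ) + 1) * v n) / a ^ 2
      = ∑' n : ℕ, (2 / a - ((n : ℝ) + 1) / a ^ 2) * v n := by
        rw [← tsum_mul_left, ← tsum_div_const,
          ← (hs.mul_left _).tsum_sub (hsucc.div_const _)]
        congr 1 with n
        ring
    _ ≤ ∑' n : ℕ, v n / ((n : ℝ) + 1) := by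
        refine Summable.tsum_le_tsum (fun n => ?_) ?_ hdiv
        · rw [div_eq_inv_mul (v n)]
          exact mul_le_mul_of_nonneg_right (two_div_sub_div_sq_le_inv n.cast_add_one_pos a) (hv n)
        · exact ((hs.mul_left (2 / a)).sub (hsucc.div_const (a ^ 2))).congr fun n => by ring

theorem tsum_div_add_one_le_tsum_div_succ (hv : ∀ n, 0 ≤ v n) (hs : Summable v)
    (hns : Summable fun n : ℕ => (n : ℝ) * v n) {α : ℝ}
    (hle : ∑' n : ℕ, (n : ℝ) * v n ≤ α * ∑' n, v n) :
    (∑' n, v n) / (α + 1) ≤ ∑' n : ℕ, v n / ((n : ℝ) + 1) := by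
  set S := ∑' n, v n
  set a := α + 1
  have hsucc : ∑' n : ℕ, ((n : ℝ) + 1) * v n = ∑' n : ℕ, (n : ℝ) * v n + S := by
    simp only [add_mul, one_mul]
    exact hns.tsum_add hs
  calc S / a = 2 / a * S - a * S / a ^ 2 := by
        rcases eq_or_ne a 0 with ha | ha
        · simp [ha]
        · field_simp
          ring
    _ ≤ 2 / a * S - (∑' n : ℕ, ((n : ℝ) + 1) * v n) / a ^ 2 := by
        rw [hsucc]
        gcongr
        linarith
    _ ≤ ∑' n : ℕ, v n / ((n : ℝ) + 1) := two_div_mul_tsum_sub_le_tsum_div_succ hv hs hns a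

end WeightedSeries

theorem stmt_6_general (w : ℕ → ℝ) (hw : ∀ n, 0 ≤ w n)
    (hS : Summable fun n : ℕ => (Nat.factorial n : ℝ) * w n)
    (α : ℝ)
    (hsum : Summable fun n : ℕ => (n : ℝ) * (Nat.factorial n : ℝ) * w n)
    (hle : (∑' n : ℕ, (n : ℝ) * (Nat.factorial n : ℝ) * w n) ≤
      α * ∑' n : ℕ, (Nat.factorial n : ℝ) * w n) :
    (∑' n : ℕ, (Nat.factorial n : ℝ) / ((n : ℝ) + 1) * w n) ≥
      (∑' n : ℕ, (Nat.factorial n : ℝ) * w n) / (α + 1) := by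
  have key := tsum_div_add_one_le_tsum_div_succ (v := fun n => (Nat.factorial n : ℝ) * w n)
    (fun n => mul_nonneg (by positivity) (hw n)) hS (by simpa only [mul_assoc] using hsum)
    (by simpa only [mul_assoc] using hle)
  simpa only [div_mul_eq_mul_div] using key

/-- spectral core of Theorem 2.8, the variance lower bound:
if `w ≥ 0`, `S = ∑ n!·w n < ∞` and `∑ n·n!·w n` converges with
`∑ n·n!·w n ≤ α·S` for some `α > 0`, then
`∑ (n!/(n+1))·w n ≥ S/(α+1)`. -/
theorem stmt_6 (w : ℕ → ℝ) (hw : ∀ n, 0 ≤ w n)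
    (hS : Summable fun n : ℕ => (Nat.factorial n : ℝ) * w n)
    (α : ℝ) (hα : 0 < α)
    (hsum : Summable fun n : ℕ => (n : ℝ) * (Nat.factorial n : ℝ) * w n)
    (hle : (∑' n : ℕ, (n : ℝ) * (Nat.factorial n : ℝ) * w n) ≤
      α * ∑' n : ℕ, (Nat.factorial n : ℝ) * w n) :
    (∑' n : ℕ, (Nat.factorial n : ℝ) / ((n : ℝ) + 1) * w n) ≥
      (∑' n : ℕ, (Nat.factorial n : ℝ) * w n) / (α + 1) :=
  stmt_6_general w hw hS α hsum hle
end

section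
/- (Core integral estimate in the proof of Theorem 2.5, the Poisson L¹–L² inequality.) For every real b with 0 < b ≤ 1, one has ∫_1^2 b^{(2/v) − 1} dv ≤ 2 · ∫_0^1 b^{u} du ≤ 2 / (1 + (1/2) · log(1/b)). -/
/-! The substitution `u = 2/v - 1` maps `[1, 2]` onto `[0, 1]` with Jacobian `2/v² ≥ 1/2`, which
gives the first inequality. For the second, with `c = log (1/b)` one has
`∫₀¹ b^u du = (1 - e^{-c})/c`, and `(1 - e^{-c})/c ≤ 2/(2 + c)` is `tanh (c/2) ≤ c/2`, i.e. the
Padé bound `e^c ≤ (2 + c)/(2 - c)` for `c < 2` (for `c ≥ 2` it is trivial). -/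

open Real intervalIntegral Set

lemma one_sub_exp_neg_mul_two_add_le {c : ℝ} (hc : 0 ≤ c) : (1 - exp (-c)) * (2 + c) ≤ 2 * c := by
  rcases lt_or_ge c 2 with hc2 | hc2
  · have hpade : (2 - c) / (2 + c) ≤ exp (-c) := by
      rw [exp_neg, ← inv_div]
      exact inv_anti₀ (by positivity) (exp_le_two_add_div_two_sub hc hc2)
    have := mul_le_mul_of_nonneg_right hpade (by linarith : (0 : ℝ) ≤ 2 + c)
    rw [div_mul_cancel₀ _ (by linarith)] at this
    linarith
  · nlinarith [exp_pos (-c)]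

lemma integral_const_rpow {b : ℝ} (hb0 : 0 < b) (hb1 : b ≠ 1) (a c : ℝ) :
    ∫ x in a..c, b ^ x = (b ^ c - b ^ a) / log b := by
  have hlog : log b ≠ 0 := log_ne_zero_of_pos_of_ne_one hb0 hb1
  have hderiv (x : ℝ) : HasDerivAt (fun x => b ^ x / log b) (b ^ x) x := by
    simpa [hlog] using (hasStrictDerivAt_const_rpow hb0 x).hasDerivAt.div_const (log b)
  rw [integral_eq_sub_of_hasDerivAt (fun x _ => hderiv x)
    ((continuous_const_rpow hb0.ne').intervalIntegrable _ _)]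
  ring

lemma integral_rpow_zero_one_le {b : ℝ} (hb0 : 0 < b) (hb1 : b ≤ 1) :
    ∫ u in (0 : ℝ)..1, b ^ u ≤ 1 / (1 + 1 / 2 * log (1 / b)) := by
  rcases hb1.eq_or_lt with rfl | hb1
  · simp
  obtain ⟨c, hc, rfl⟩ : ∃ c, 0 < c ∧ b = exp (-c) :=
    ⟨-log b, neg_pos.2 (log_neg hb0 hb1), by rw [neg_neg, exp_log hb0]⟩
  rw [integral_const_rpow hb0 hb1.ne, rpow_one, rpow_zero, log_exp, one_div (exp _), ← exp_neg,
    neg_neg, log_exp, div_neg, ← neg_div, neg_sub, div_le_div_iff₀ hc (by positivity)]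
  linarith [one_sub_exp_neg_mul_two_add_le hc.le]

lemma integral_comp_two_div_sub_one_mul {f : ℝ → ℝ} (hf : Continuous f) :
    ∫ v in (1 : ℝ)..2, f (2 / v - 1) * (2 / v ^ 2) = ∫ u in (0 : ℝ)..1, f u := by
  have hderiv : ∀ v ∈ uIcc (1 : ℝ) 2, HasDerivAt (fun v => 2 / v - 1) (-(2 / v ^ 2)) v := by
    intro v hv
    have hv0 : v ≠ 0 := by rw [uIcc_of_le (by norm_num)] at hv; linarith [hv.1]
    simpa [div_eq_mul_inv] using ((hasDerivAt_inv hv0).const_mul 2).sub_const 1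
  have hcont : ContinuousOn (fun v : ℝ => -(2 / v ^ 2)) (uIcc 1 2) := by
    rw [uIcc_of_le (by norm_num)]
    exact ContinuousOn.neg (continuousOn_const.div (by fun_prop) fun v hv => by
      have := hv.1; positivity)
  have hsubst := integral_comp_mul_deriv hderiv hcont hf
  norm_num [integral_symm 0 1] at hsubst
  exact hsubst

lemma integral_comp_two_div_sub_one_le {f : ℝ → ℝ} (hf : Continuous f)
    (hf0 : ∀ u ∈ Icc (0 : ℝ) 1, 0 ≤ f u) :
    ∫ v in (1 : ℝ)..2, f (2 / v - 1) ≤ 2 * ∫ u in (0 : ℝ)..1, f u := by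
  have hcomp : ContinuousOn (fun v : ℝ => f (2 / v - 1)) (Icc 1 2) :=
    hf.comp_continuousOn ((continuousOn_const.div continuousOn_id fun v hv => by
      have := hv.1; positivity).sub continuousOn_const)
  rw [← integral_comp_two_div_sub_one_mul hf, ← integral_const_mul]
  refine integral_mono_on (by norm_num) (hcomp.intervalIntegrable_of_Icc (by norm_num))
    (ContinuousOn.intervalIntegrable_of_Icc (by norm_num) ?_) fun v ⟨hv1, hv2⟩ => ?_
  · exact continuousOn_const.mul (hcomp.mul (continuousOn_const.div (by fun_prop)
      fun v hv => by have := hv.1; positivity))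
  · have hfv : 0 ≤ f (2 / v - 1) := hf0 _
      ⟨by rw [sub_nonneg, le_div_iff₀ (by linarith)]; linarith,
        by rw [sub_le_iff_le_add, div_le_iff₀ (by linarith)]; linarith⟩
    have hweight : 1 ≤ 2 * (2 / v ^ 2) := by
      rw [mul_div_assoc', le_div_iff₀ (by positivity)]; nlinarith
    nlinarith

/-- core integral estimate in the proof of Theorem 2.5, the Poisson
L¹–L² inequality: for `0 < b ≤ 1`,
`∫_1^2 b^{2/v - 1} dv ≤ 2·∫_0^1 b^u du ≤ 2/(1 + (1/2)·log(1/b))`. -/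
theorem stmt_8 (b : ℝ) (hb0 : 0 < b) (hb1 : b ≤ 1) :
    (∫ v in (1 : ℝ)..2, b ^ ((2 / v) - 1 : ℝ)) ≤ 2 * ∫ u in (0 : ℝ)..1, b ^ (u : ℝ) ∧
    2 * (∫ u in (0 : ℝ)..1, b ^ (u : ℝ)) ≤ 2 / (1 + (1 / 2) * Real.log (1 / b)) := by
  constructor
  · exact integral_comp_two_div_sub_one_le (continuous_const_rpow hb0.ne')
      fun u _ => (rpow_pos_of_pos hb0 u).le
  · rw [← mul_one_div 2]
    exact mul_le_mul_of_nonneg_left (integral_rpow_zero_one_le hb0 hb1) zero_le_two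
end
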